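/- For the symmetric deterministic interference channel with n ≤ 2m and 3m ≤ 2n (1/2 ≤ α ≤ 2/3): every (R1,R2) ∈ C satisfies R1+R2 ≤ 2m, the point (m,m) lies in C ∩ B, and (m,m) is the unique point of C ∩ B with R1+R2 = 2m; hence the symmetric sum-rate point is the only efficient Nash equilibrium point. -/

import Mathlib

/-- Positive part of an integer: `x⁺ = max(x,0)`. -/
def ipos (x : ℤ) : ℤ := max x 0

/-- Capacity region `C` of the two-user linear deterministic interference channel
with gains `n11 n12 n21 n22`, as a predicate on rate pairs `(R1, R2)`. -/
def detC (n11 n12 n21 n22 : ℤ) (R1 R2 : ℝ) : Prop :=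
  0 ≤ R1 ∧ 0 ≤ R2 ∧
  R1 ≤ (n11 : ℝ) ∧ R2 ≤ (n22 : ℝ) ∧
  R1 + R2 ≤ ((ipos (n11 - n12) + max n22 n12 : ℤ) : ℝ) ∧
  R1 + R2 ≤ ((ipos (n22 - n21) + max n11 n21 : ℤ) : ℝ) ∧
  R1 + R2 ≤ ((max n21 (ipos (n11 - n12)) + max n12 (ipos (n22 - n21)) : ℤ) : ℝ) ∧
  2 * R1 + R2 ≤ ((max n11 n21 + ipos (n11 - n12) + max n12 (ipos (n22 - n21)) : ℤ) : ℝ) ∧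
  R1 + 2 * R2 ≤ ((max n22 n12 + ipos (n22 - n21) + max n21 (ipos (n11 - n12)) : ℤ) : ℝ)

/-- `Lᵢ = (nᵢᵢ − nᵢⱼ)⁺`. -/
def detL (nii nij : ℤ) : ℤ := ipos (nii - nij)

/-- `Uᵢ`: `nᵢᵢ − min(Lⱼ, nᵢⱼ)` if `nᵢⱼ ≤ nᵢᵢ`, else `min((nᵢⱼ − Lⱼ)⁺, nᵢᵢ)`,
where `Lⱼ = (nⱼⱼ − nⱼᵢ)⁺`. -/
def detU (nii nij nji njj : ℤ) : ℤ :=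
  if nij ≤ nii then nii - min (detL njj nji) nij
  else min (ipos (nij - detL njj nji)) nii

/-- The box `B = {(R1,R2) : Lᵢ ≤ Rᵢ ≤ Uᵢ, i = 1,2}`. -/
def detB (n11 n12 n21 n22 : ℤ) (R1 R2 : ℝ) : Prop :=
  ((detL n11 n12 : ℤ) : ℝ) ≤ R1 ∧ R1 ≤ ((detU n11 n12 n21 n22 : ℤ) : ℝ) ∧
  ((detL n22 n21 : ℤ) : ℝ) ≤ R2 ∧ R2 ≤ ((detU n22 n21 n12 n11 : ℤ) : ℝ)

/-!
For `m ≤ n ≤ 2m` the cross gain dominates the private level `n - m`, so the third sum-rate bound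
of `C` collapses to `max m (n - m) + max m (n - m) = 2m`, and `U₁ = U₂ = n - (n - m) = m`.
Hence `B` lies below the corner `(m, m)`, which is the only point of `B` of sum rate `2m`;
the condition `3m ≤ 2n` is what puts that corner inside `C`.
-/

section SymmetricChannel

variable {n m : ℤ}

lemma ipos_of_nonneg {x : ℤ} (hx : 0 ≤ x) : ipos x = x := max_eq_left hx

lemma max_ipos_sub_eq_self (hm : 0 ≤ m) (h : n ≤ 2 * m) : max m (ipos (n - m)) = m := by
  simp only [ipos]
  omega

lemma detC_symm_sum_le (hm : 0 ≤ m) (h : n ≤ 2 * m) {R1 R2 : ℝ} (hC : detC n m m n R1 R2) :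
    R1 + R2 ≤ 2 * (m : ℝ) := by
  obtain ⟨-, -, -, -, -, -, hsum, -, -⟩ := hC
  rw [max_ipos_sub_eq_self hm h] at hsum
  push_cast at hsum
  linarith

lemma detC_symm_cross_cross (hm : 0 ≤ m) (h1 : n ≤ 2 * m) (h2 : 3 * m ≤ 2 * n) :
    detC n m m n m m := by
  have hmn : m ≤ n := by omega
  have hmn' : (m : ℝ) ≤ n := by exact_mod_cast hmn
  have hm' : (0 : ℝ) ≤ m := by exact_mod_cast hm
  have h2' : 3 * (m : ℝ) ≤ 2 * n := by exact_mod_cast h2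
  refine ⟨hm', hm', hmn', hmn', ?_, ?_, ?_, ?_, ?_⟩ <;>
    simp only [ipos_of_nonneg (sub_nonneg.mpr hmn), max_eq_left hmn,
      max_eq_left (show n - m ≤ m by omega)] <;>
    push_cast <;> linarith

lemma detL_of_le (hmn : m ≤ n) : detL n m = n - m := ipos_of_nonneg (sub_nonneg.mpr hmn)

lemma detU_symm (hmn : m ≤ n) (h : n ≤ 2 * m) : detU n m m n = m := by
  rw [detU, if_pos hmn, detL_of_le hmn]
  omega

lemma detB_symm_iff (hmn : m ≤ n) (h : n ≤ 2 * m) {R1 R2 : ℝ} :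
    detB n m m n R1 R2 ↔ (n : ℝ) - m ≤ R1 ∧ R1 ≤ m ∧ (n : ℝ) - m ≤ R2 ∧ R2 ≤ m := by
  rw [detB, detL_of_le hmn, detU_symm hmn h, Int.cast_sub]

end SymmetricChannel

theorem stmt18_general (n m : ℤ) (hm : 0 ≤ m) (h1 : n ≤ 2 * m) (h2 : 3 * m ≤ 2 * n) :
    (∀ R1 R2 : ℝ, detC n m m n R1 R2 → R1 + R2 ≤ 2 * (m : ℝ)) ∧
    (detC n m m n (m : ℝ) (m : ℝ) ∧ detB n m m n (m : ℝ) (m : ℝ)) ∧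
    (∀ R1 R2 : ℝ, detC n m m n R1 R2 → detB n m m n R1 R2 →
      R1 + R2 = 2 * (m : ℝ) → R1 = (m : ℝ) ∧ R2 = (m : ℝ)) := by
  have hmn : m ≤ n := by omega
  have h1' : (n : ℝ) ≤ 2 * m := by exact_mod_cast h1
  refine ⟨fun _ _ => detC_symm_sum_le hm h1, ⟨detC_symm_cross_cross hm h1 h2, ?_⟩, ?_⟩
  · rw [detB_symm_iff hmn h1]
    exact ⟨by linarith, le_rfl, by linarith, le_rfl⟩
  · intro R1 R2 _ hB hsum
    obtain ⟨-, hR1, -, hR2⟩ := (detB_symm_iff hmn h1).mp hB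
    constructor <;> linarith

/-- Symmetric deterministic IC with `n ≤ 2m` and `3m ≤ 2n` (`1/2 ≤ α ≤ 2/3`): the maximum
sum rate over `C` is `2m`, the point `(m,m)` lies in `C ∩ B`, and it is the unique point
of `C ∩ B` with sum rate `2m`; i.e., the symmetric sum-rate point is the only efficient
Nash equilibrium point. -/
theorem stmt18 (n m : ℤ) (hn : 0 ≤ n) (hm : 0 ≤ m) (h1 : n ≤ 2 * m) (h2 : 3 * m ≤ 2 * n) :
    (∀ R1 R2 : ℝ, detC n m m n R1 R2 → R1 + R2 ≤ 2 * (m : ℝ)) ∧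
    (detC n m m n (m : ℝ) (m : ℝ) ∧ detB n m m n (m : ℝ) (m : ℝ)) ∧
    (∀ R1 R2 : ℝ, detC n m m n R1 R2 → detB n m m n R1 R2 →
      R1 + R2 = 2 * (m : ℝ) → R1 = (m : ℝ) ∧ R2 = (m : ℝ)) :=
  stmt18_general n m hm h1 h2
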